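/- For all l ∈ n_l and m ∈ n_b, the partial derivative of the from-end complex line flow S^fr_l with respect to the voltage magnitude v_m exists and equals C_{l m}·exp(j·θ_m)·conj(I^fr_l) + (Σ_k C_{l k}·V_k)·conj((Y_f)_{l m})·conj(exp(j·θ_m)); i.e. the one-variable function t ↦ S^fr_l computed from the magnitude vector obtained by replacing v_m with t has this derivative at t = v_m. -/

import Mathlib

open Matrix

/-- Complex bus voltage `V_k = v_k · exp(j θ_k)`. -/
noncomputable def busV {nb : Type*} (v θ : nb → ℝ) (k : nb) : ℂ :=
  (v k : ℂ) * Complex.exp (Complex.I * (θ k : ℂ))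

/-- From-end line current `I^fr_l = Σ_k (Y_f)_{l k} V_k`. -/
noncomputable def lineIfr {nl nb : Type*} [Fintype nb] (Yf : Matrix nl nb ℂ)
    (v θ : nb → ℝ) (l : nl) : ℂ :=
  ∑ k, Yf l k * busV v θ k

/-- From-end complex line flow `S^fr_l = (Σ_k C_{l k} V_k) · conj(I^fr_l)`. -/
noncomputable def lineSfr {nl nb : Type*} [Fintype nb] (C Yf : Matrix nl nb ℂ)
    (v θ : nb → ℝ) (l : nl) : ℂ :=
  (∑ k, C l k * busV v θ k) * (starRingEnd ℂ) (lineIfr Yf v θ l)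

open Function

section

variable {nb : Type*} [DecidableEq nb] (v θ : nb → ℝ) (m : nb)

theorem hasDerivAt_busV_update (k : nb) :
    HasDerivAt (fun t : ℝ => busV (update v m t) θ k)
      (((Pi.single m 1 : nb → ℝ) k : ℂ) * Complex.exp (Complex.I * (θ k : ℂ))) (v m) :=
  ((hasDerivAt_pi.1 (hasDerivAt_update v m (v m)) k).ofReal_comp).mul_const _

theorem hasDerivAt_sum_mul_busV_update [Fintype nb] (a : nb → ℂ) :
    HasDerivAt (fun t : ℝ => ∑ k, a k * busV (update v m t) θ k)
      (a m * Complex.exp (Complex.I * (θ m : ℂ))) (v m) := by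
  refine (HasDerivAt.fun_sum (u := Finset.univ)
    fun k _ => (hasDerivAt_busV_update v θ m k).const_mul (a k)).congr_deriv ?_
  rw [Fintype.sum_eq_single m fun k hk => by simp [Pi.single_eq_of_ne hk]]
  simp

end

/-- Partial derivative of the from-end complex line flow `S^fr_l` with respect
to the voltage magnitude `v_m`. -/
theorem hasDerivAt_lineSfr_magnitude {nl nb : Type*} [Fintype nb] [DecidableEq nb]
    (C Yf : Matrix nl nb ℂ) (v θ : nb → ℝ) (l : nl) (m : nb) :
    HasDerivAt (fun t : ℝ => lineSfr C Yf (Function.update v m t) θ l)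
      (C l m * Complex.exp (Complex.I * (θ m : ℂ)) *
          (starRingEnd ℂ) (lineIfr Yf v θ l)
        + (∑ k, C l k * busV v θ k) * (starRingEnd ℂ) (Yf l m) *
            (starRingEnd ℂ) (Complex.exp (Complex.I * (θ m : ℂ))))
      (v m) := by
  have hS := hasDerivAt_sum_mul_busV_update v θ m (C l)
  have hI := (hasDerivAt_sum_mul_busV_update v θ m (Yf l)).star
  refine (hS.fun_mul hI).congr_deriv ?_
  rw [update_eq_self, lineIfr, Complex.star_def, map_mul]
  ring
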